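/- Let v̂ ∈ [0,1]^k be of the sublabel form v̂ = (1,…,1,α,0,…,0) with α ∈ [0,1] in position j, encoding u₀ = γ_j + α·h on the label grid. Then for the data term D(v̂) = inf over x ∈ Δ_k (simplex), y ∈ ℝ^k with v̂ = y/h + Iᵀx of ∑ᵢ xᵢ·ρᵢ**(yᵢ/xᵢ), choosing x = e_j and y = h(v̂ − Iᵀe_j) is feasible and yields D(v̂) ≤ ρ_j**(u₀), where ρ_j = ρ + δ{·∈[γ_j,γ_{j+1}]} and I is the lower-triangular integration matrix with rows (1,…,1,−γ_i/h,0,…,0). -/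

import Mathlib

open Classical Finset

/-- Fenchel conjugate of an `EReal`-valued function on `ℝ`. -/
noncomputable def conj1 (F : ℝ → EReal) : ℝ → EReal :=
  fun v => ⨆ t : ℝ, ((t * v : ℝ) : EReal) - F t

/-- Restriction of ρ to the interval `[a, b]` (plus convex indicator). -/
noncomputable def restr (ρ : ℝ → EReal) (a b : ℝ) : ℝ → EReal :=
  fun t => ρ t + (if t ∈ Set.Icc a b then (0 : EReal) else ⊤)

/-- Proposition 4 (relation to Zach–Kohli): for a sublabel-form `v̂ = (1,…,1,α,0,…,0)`
encoding `u₀ = γ_j + α·h`, the 1-sparse choice `x = e_j`, `y = h(v̂ − Iᵀe_j)` is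
feasible for the primal data term and yields `D(v̂) ≤ ρ_j**(u₀)`. -/
theorem sublabel_choice_feasible_and_bounds_dataterm
    (k : ℕ) (j : Fin k) (γ : ℕ → ℝ) (h : ℝ) (hh : 0 < h)
    (hγ : ∀ i : ℕ, γ (i + 1) = γ i + h)
    (α : ℝ) (hα : α ∈ Set.Icc (0:ℝ) 1)
    (ρ : ℝ → EReal)
    (u₀ : ℝ) (hu : u₀ = γ j + α * h)
    (vhat : Fin k → ℝ)
    (hvhat : ∀ i : Fin k, vhat i = if (i : ℕ) < (j : ℕ) then 1
      else if i = j then α else 0)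
    (Imat : Fin k → Fin k → ℝ)
    (hImat : ∀ i l : Fin k, Imat i l =
      if (l : ℕ) < (i : ℕ) then 1 else if l = i then -γ (i : ℕ) / h else 0)
    (ρbi : Fin k → ℝ → EReal)
    (hρbi : ∀ i : Fin k, ρbi i = conj1 (conj1 (restr ρ (γ (i : ℕ)) (γ ((i : ℕ) + 1)))))
    (D : EReal)
    (hD : D = ⨅ (x : Fin k → ℝ) (y : Fin k → ℝ),
      if ((∀ i, 0 ≤ x i) ∧ (∑ i, x i) = 1 ∧
          (∀ i, vhat i = y i / h + ∑ l, Imat l i * x l)) then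
        (∑ i, if x i = 0 then (0 : EReal) else ((x i : ℝ) : EReal) * ρbi i (y i / x i))
      else ⊤)
    (x₀ : Fin k → ℝ) (hx₀ : ∀ i, x₀ i = if i = j then 1 else 0)
    (y₀ : Fin k → ℝ) (hy₀ : ∀ i, y₀ i = h * (vhat i - ∑ l, Imat l i * x₀ l)) :
    ((∀ i, 0 ≤ x₀ i) ∧ (∑ i, x₀ i) = 1 ∧
      (∀ i, vhat i = y₀ i / h + ∑ l, Imat l i * x₀ l)) ∧
    D ≤ ρbi j u₀ := by
  have hne : h ≠ 0 := ne_of_gt hh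
  have feas : ((∀ i, 0 ≤ x₀ i) ∧ (∑ i, x₀ i) = 1 ∧
      (∀ i, vhat i = y₀ i / h + ∑ l, Imat l i * x₀ l)) := by
    refine ⟨fun i => ?_, ?_, fun i => ?_⟩
    · rw [hx₀]; split <;> norm_num
    · simp [hx₀]
    · rw [hy₀]; field_simp; ring
  -- value of y₀ at j
  have hsumj : (∑ l, Imat l j * x₀ l) = -γ (j : ℕ) / h := by
    have : (∑ l, Imat l j * x₀ l) = Imat j j := by
      simp [hx₀, mul_ite, Finset.sum_ite_eq']
    rw [this, hImat]; simp
  have hyj : y₀ j = u₀ := by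
    rw [hy₀, hsumj, hvhat]
    simp only [lt_irrefl, if_false, if_pos rfl, eq_self_iff_true, if_true]
    field_simp [hu]; rw [hu]; ring
  have hxj : x₀ j = 1 := by rw [hx₀]; simp
  have hval : (∑ i, if x₀ i = 0 then (0 : EReal) else ((x₀ i : ℝ) : EReal) * ρbi i (y₀ i / x₀ i))
      = ρbi j u₀ := by
    rw [Finset.sum_eq_single j]
    · rw [if_neg (by rw [hxj]; norm_num), hxj, hyj]
      simp
    · intro b _ hb
      rw [if_pos]
      rw [hx₀, if_neg hb]
    · intro hj; exact absurd (Finset.mem_univ j) hj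
  refine ⟨feas, ?_⟩
  rw [hD]
  calc (⨅ (x : Fin k → ℝ) (y : Fin k → ℝ), _ : EReal) ≤ _ :=
        iInf₂_le x₀ y₀
    _ = ρbi j u₀ := by rw [if_pos feas, hval]
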